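/- For a uniformly random bijection π of an n-set conditioned on π(u) = C and π(v) ∈ [A+1, B] (where u ≠ v, 1 ≤ C ≤ A < B ≤ n), the expected size of the influenced set S_v^π of the dynamic greedy MIS update between u and v is strictly less than n/(B−A). -/

import Mathlib

variable {V : Type*} [Fintype V] [DecidableEq V]

/-- The greedy MIS of `G` with respect to the order given by the rank function
`π : V → ℕ`: a vertex is selected iff no `π`-earlier neighbor is selected. -/
def greedyMIS (G : SimpleGraph V) (π : V → ℕ) : V → Prop :=
  fun v => ∀ w, G.Adj w v → π w < π v → ¬ greedyMIS G π w
termination_by v => π v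
decreasing_by assumption

/-- `I_w^π`: the set of neighbors of `w` in `G` preceding `w` in the order `π`. -/
def predSet (G : SimpleGraph V) (π : V → ℕ) (w : V) : Set V :=
  {x | G.Adj x w ∧ π x < π w}

/-- The iterative construction: `S₀ = {v}`,
`S_{i+1} = {w ∈ M : S_i ∩ I_w ≠ ∅} ∪ {w ∉ M : I_w ∩ M ⊆ ⋃_{j ≤ i} S_j}`. -/
def Sseq (M : Set V) (I : V → Set V) (v : V) : ℕ → Set V
  | 0 => {v}
  | (i + 1) =>
      {w | w ∈ M ∧ (Sseq M I v i ∩ I w).Nonempty} ∪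
        {w | w ∉ M ∧ I w ∩ M ⊆ ⋃ j ≤ i, Sseq M I v j}

/-- `v` violates its greedy-MIS constraint after the update from `G` to `G'`:
either `v` is in the (old) greedy MIS and has an earlier MIS neighbor in `G'`,
or `v` is not in the greedy MIS and has no earlier MIS neighbor in `G'`. -/
def violated (G G' : SimpleGraph V) (π : V → ℕ) (v : V) : Prop :=
  (greedyMIS G π v ∧ ∃ w ∈ predSet G' π v, greedyMIS G π w) ∨
    (¬ greedyMIS G π v ∧ ∀ w ∈ predSet G' π v, ¬ greedyMIS G π w)

/-- The influenced set `S_v^π` of the edge update from `G` to `G'`: empty if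
`v` does not violate its greedy constraint after the update, and otherwise the
union `⋃ i, S_i` of the iterative construction (with `M` the greedy MIS of the
old graph `G` and predecessor neighborhoods taken in the updated graph `G'`). -/
def influencedSet (G G' : SimpleGraph V) (π : V → ℕ) (v : V) : Set V :=
  {x | violated G G' π v ∧
    x ∈ ⋃ i, Sseq {y | greedyMIS G π y} (predSet G' π) v i}

open scoped Classical

/-!
Double counting through an injection. Given `π` in the conditioning event and `x ∈ S_v^π`,
rotate the positions occupied by vertices of `S_v^π` up to `π x` one step down, so that `v`,
the `π`-minimal vertex of `S_v^π`, moves to `π x`. The resulting `σ` still has `u` at `C` and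
`v` beyond `A`, and `(π, x)` is recovered from it: moving `v` back to `A + 1` and shifting the
positions in between up yields a bijection that orders `S_v^π`, and its complement, as `π`
does and keeps `u` before `v`. Such a reordering changes neither the greedy MIS, nor the
violation at `v`, nor the influenced set, so it gives back `S_v^π`, and with it `π` and `x`.
Thus `∑_π |S_v^π|` is at most the number of `σ` with `σ(u) = C` and `σ(v) > A`, which is
`(n - A)/(B - A)` times the size of the conditioning event because all positions of `v` other
than `C` are equally frequent; and `A ≥ 1` as soon as that event is nonempty.
-/

section GreedyMIS

variable {V : Type*} {G : SimpleGraph V} {π : V → ℕ} {y z : V}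

theorem greedyMIS_iff : greedyMIS G π y ↔ ∀ w, G.Adj w y → π w < π y → ¬ greedyMIS G π w := by
  rw [greedyMIS]

theorem not_greedyMIS_iff : ¬ greedyMIS G π y ↔ ∃ w, G.Adj w y ∧ π w < π y ∧ greedyMIS G π w := by
  simp [greedyMIS_iff (y := y)]

theorem greedyMIS.not_adj (hπ : Function.Injective π) (hy : greedyMIS G π y)
    (hz : greedyMIS G π z) : ¬ G.Adj y z := by
  intro hyz
  rcases lt_or_gt_of_ne (hπ.ne hyz.ne) with h | h
  · exact greedyMIS_iff.1 hz y hyz h hy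
  · exact greedyMIS_iff.1 hy z hyz.symm h hz

end GreedyMIS

section Sseq

variable {V : Type*} {M T : Set V} {I : V → Set V} {v w y : V}

theorem mem_Sseq_zero : w ∈ Sseq M I v 0 ↔ w = v := by
  rw [Sseq, Set.mem_singleton_iff]

theorem mem_Sseq_succ {i : ℕ} : w ∈ Sseq M I v (i + 1) ↔
    w ∈ M ∧ (Sseq M I v i ∩ I w).Nonempty ∨ w ∉ M ∧ I w ∩ M ⊆ ⋃ j ≤ i, Sseq M I v j := by
  rw [Sseq]; rfl

theorem self_mem_iUnion_Sseq : v ∈ ⋃ i, Sseq M I v i :=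
  Set.mem_iUnion.2 ⟨0, mem_Sseq_zero.2 rfl⟩

theorem mem_iUnion_Sseq_of_mem (hw : w ∈ M) (hy : y ∈ ⋃ i, Sseq M I v i) (hyw : y ∈ I w) :
    w ∈ ⋃ i, Sseq M I v i := by
  obtain ⟨i, hi⟩ := Set.mem_iUnion.1 hy
  exact Set.mem_iUnion.2 ⟨i + 1, mem_Sseq_succ.2 (Or.inl ⟨hw, y, hi, hyw⟩)⟩

theorem mem_iUnion_Sseq_of_notMem [Finite V] (hw : w ∉ M) (h : I w ∩ M ⊆ ⋃ i, Sseq M I v i) :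
    w ∈ ⋃ i, Sseq M I v i := by
  obtain ⟨J, hJ, hsub⟩ := Set.finite_subset_iUnion (Set.toFinite _) h
  obtain ⟨N, hN⟩ := hJ.bddAbove
  refine Set.mem_iUnion.2 ⟨N + 1, mem_Sseq_succ.2 (Or.inr ⟨hw, hsub.trans ?_⟩)⟩
  simp only [Set.iUnion_subset_iff]
  exact fun i hi => Set.subset_biUnion_of_mem (u := Sseq M I v) (hN hi)

theorem subset_iUnion_Sseq_of_notMem (hw : w ∈ ⋃ i, Sseq M I v i) (hwv : w ≠ v) (hwM : w ∉ M) :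
    I w ∩ M ⊆ ⋃ i, Sseq M I v i := by
  obtain ⟨_ | i, hi⟩ := Set.mem_iUnion.1 hw
  · exact absurd (mem_Sseq_zero.1 hi) hwv
  · rcases mem_Sseq_succ.1 hi with ⟨hwM', -⟩ | ⟨-, hsub⟩
    · exact absurd hwM' hwM
    · exact hsub.trans (Set.iUnion₂_subset fun j _ => Set.subset_iUnion _ j)

theorem iUnion_Sseq_subset (hv : v ∈ T) (hM : ∀ w ∈ M, ∀ y ∈ T, y ∈ I w → w ∈ T)
    (hN : ∀ w ∉ M, I w ∩ M ⊆ T → w ∈ T) : ⋃ i, Sseq M I v i ⊆ T := by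
  suffices ∀ i, ∀ j ≤ i, Sseq M I v j ⊆ T from
    Set.iUnion_subset fun i => this i i le_rfl
  intro i
  induction i with
  | zero =>
    rintro j hj w hw
    rw [Nat.le_zero.1 hj, mem_Sseq_zero] at hw
    exact hw ▸ hv
  | succ i ih =>
    intro j hj
    rcases Nat.lt_or_eq_of_le hj with hj | rfl
    · exact ih j (Nat.le_of_lt_succ hj)
    · intro w hw
      rcases mem_Sseq_succ.1 hw with ⟨hw, y, hy, hyw⟩ | ⟨hw, hsub⟩
      · exact hM w hw y (ih i le_rfl hy) hyw
      · exact hN w hw (hsub.trans (Set.iUnion₂_subset ih))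

end Sseq

section Update

variable {V : Type*} {G G' : SimpleGraph V} {π : V → ℕ} {u v a b w : V}

def IsEdgeUpdate (G G' : SimpleGraph V) (u v : V) : Prop :=
  G' = G ⊔ SimpleGraph.fromEdgeSet {s(u, v)} ∨ G' = G \ SimpleGraph.fromEdgeSet {s(u, v)}

theorem IsEdgeUpdate.adj_iff (hupd : IsEdgeUpdate G G' u v) (hab : s(a, b) ≠ s(u, v)) :
    G'.Adj a b ↔ G.Adj a b := by
  rcases hupd with rfl | rfl <;> simp [hab]

theorem IsEdgeUpdate.eq_of_adj_of_not_adj (hupd : IsEdgeUpdate G G' u v) (hG : G.Adj a b)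
    (hG' : ¬ G'.Adj a b) : a = u ∧ b = v ∨ a = v ∧ b = u := by
  by_contra h
  exact hG' ((hupd.adj_iff (by simpa [Sym2.eq_iff] using h)).2 hG)

theorem IsEdgeUpdate.eq_of_not_adj_of_adj (hupd : IsEdgeUpdate G G' u v) (hG : ¬ G.Adj a b)
    (hG' : G'.Adj a b) : a = u ∧ b = v ∨ a = v ∧ b = u := by
  by_contra h
  exact hG ((hupd.adj_iff (by simpa [Sym2.eq_iff] using h)).1 hG')

def influenceClosure (G G' : SimpleGraph V) (π : V → ℕ) (v : V) : Set V :=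
  ⋃ i, Sseq {y | greedyMIS G π y} (predSet G' π) v i

theorem influencedSet_eq_influenceClosure (h : violated G G' π v) :
    influencedSet G G' π v = influenceClosure G G' π v := by
  ext; simp [influencedSet, influenceClosure, h]

theorem self_mem_influenceClosure : v ∈ influenceClosure G G' π v :=
  self_mem_iUnion_Sseq

theorem IsEdgeUpdate.le_of_mem_influenceClosure (hupd : IsEdgeUpdate G G' u v)
    (hw : w ∈ influenceClosure G G' π v) : π v ≤ π w := by
  refine iUnion_Sseq_subset (T := {w | π v ≤ π w}) (le_refl (π v)) ?_ ?_ hw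
  · exact fun w _ y hy hyw => hy.trans hyw.2.le
  · intro w hw hsub
    obtain ⟨z, hzw, hlt, hz⟩ := not_greedyMIS_iff.1 hw
    by_cases hz' : G'.Adj z w
    · exact (hsub ⟨⟨hz', hlt⟩, hz⟩).trans hlt.le
    · rcases hupd.eq_of_adj_of_not_adj hzw hz' with ⟨-, rfl⟩ | ⟨rfl, -⟩
      · exact Nat.le_refl _
      · exact hlt.le

theorem self_mem_influencedSet (hw : w ∈ influencedSet G G' π v) : v ∈ influencedSet G G' π v := by
  rw [influencedSet_eq_influenceClosure hw.1]
  exact self_mem_influenceClosure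

theorem IsEdgeUpdate.le_of_mem_influencedSet (hupd : IsEdgeUpdate G G' u v)
    (hw : w ∈ influencedSet G G' π v) : π v ≤ π w := by
  rw [influencedSet_eq_influenceClosure hw.1] at hw
  exact hupd.le_of_mem_influenceClosure hw

end Update

section Invariance

variable {V : Type*} {G G' : SimpleGraph V} {π π' : V → ℕ} {u v w y : V}

theorem exists_greedyMIS_neighbor_same_side [Finite V] (hupd : IsEdgeUpdate G G' u v)
    (hviol : violated G G' π v) (huv : π u < π v) (hy : ¬ greedyMIS G π y) :
    ∃ z, G.Adj z y ∧ π z < π y ∧ greedyMIS G π z ∧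
      ((z ∈ influenceClosure G G' π v ↔ y ∈ influenceClosure G G' π v) ∨ z = u ∧ y = v) := by
  set U := influenceClosure G G' π v
  obtain ⟨z, hzy, hzlt, hz⟩ := not_greedyMIS_iff.1 hy
  by_cases hyU : y ∈ U
  · by_cases hzU : z ∈ U
    · exact ⟨z, hzy, hzlt, hz, Or.inl (iff_of_true hzU hyU)⟩
    by_cases hyv : y = v
    · subst hyv
      have hall := (hviol.resolve_left fun h => hy h.1).2
      rcases hupd.eq_of_adj_of_not_adj hzy fun h => hall z ⟨h, hzlt⟩ hz with ⟨rfl, -⟩ | ⟨rfl, -⟩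
      · exact ⟨z, hzy, hzlt, hz, Or.inr ⟨rfl, rfl⟩⟩
      · exact absurd hzy G.irrefl
    · have hsub := subset_iUnion_Sseq_of_notMem hyU hyv hy
      rcases hupd.eq_of_adj_of_not_adj hzy fun h => hzU (hsub ⟨⟨h, hzlt⟩, hz⟩)
        with ⟨-, rfl⟩ | ⟨-, rfl⟩
      · exact absurd rfl hyv
      · exact absurd (hupd.le_of_mem_influenceClosure hyU) huv.not_ge
  · by_cases hout : ∃ z, G.Adj z y ∧ π z < π y ∧ greedyMIS G π z ∧ z ∉ U
    · obtain ⟨z, hzy, hzlt, hz, hzU⟩ := hout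
      exact ⟨z, hzy, hzlt, hz, Or.inl (iff_of_false hzU hyU)⟩
    push Not at hout
    refine absurd (mem_iUnion_Sseq_of_notMem hy ?_) hyU
    rintro z ⟨⟨hzy, hzlt⟩, hz⟩
    by_cases hG : G.Adj z y
    · exact hout z hG hzlt hz
    · rcases hupd.eq_of_not_adj_of_adj hG hzy with ⟨-, rfl⟩ | ⟨rfl, rfl⟩
      · exact absurd self_mem_influenceClosure hyU
      · exact absurd hzlt huv.not_gt

theorem mem_influenceClosure_of_mem_predSet (hupd : IsEdgeUpdate G G' u v)
    (hπ : Function.Injective π) (hviol : violated G G' π v) (hw : greedyMIS G π w)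
    (hyU : y ∈ influenceClosure G G' π v) (hwy : w ∈ predSet G' π y) (hne : ¬ (w = u ∧ y = v)) :
    w ∈ influenceClosure G G' π v := by
  by_cases hy : greedyMIS G π y
  · rcases hupd.eq_of_not_adj_of_adj (greedyMIS.not_adj hπ hw hy) hwy.1
      with huv | ⟨rfl, -⟩
    · exact absurd huv hne
    · exact self_mem_influenceClosure
  · by_cases hyv : y = v
    · subst hyv
      exact absurd hw ((hviol.resolve_left fun h => hy h.1).2 w hwy)
    · exact subset_iUnion_Sseq_of_notMem hyU hyv hy ⟨hwy, hw⟩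

variable [Finite V] (hupd : IsEdgeUpdate G G' u v) (hπ : Function.Injective π)
  (hviol : violated G G' π v) (huv : π u < π v) (huv' : π' u < π' v)
  (hord : ∀ a b, (a ∈ influenceClosure G G' π v ↔ b ∈ influenceClosure G G' π v) →
    π a < π b → π' a < π' b)
include hupd hπ hviol huv huv' hord

theorem greedyMIS_iff_of_reorder (y : V) :
    greedyMIS G π' y ↔ greedyMIS G π y := by
  induction y using (measure π').wf.induction with
  | _ y ih =>
  by_cases hy : greedyMIS G π y
  · simp only [hy, iff_true]
    exact greedyMIS_iff.2 fun w hwy hlt hw => greedyMIS.not_adj hπ ((ih w hlt).1 hw) hy hwy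
  · simp only [hy, iff_false]
    obtain ⟨z, hzy, hzlt, hz, hside⟩ := exists_greedyMIS_neighbor_same_side hupd hviol huv hy
    have hzlt' : π' z < π' y := by
      rcases hside with hside | ⟨rfl, rfl⟩
      · exact hord z y hside hzlt
      · exact huv'
    exact not_greedyMIS_iff.2 ⟨z, hzy, hzlt', (ih z hzlt').2 hz⟩

theorem violated_of_reorder : violated G G' π' v := by
  have hM := greedyMIS_iff_of_reorder hupd hπ hviol huv huv' hord
  rcases hviol with ⟨hv, w, ⟨hwv, -⟩, hw⟩ | ⟨hv, hall⟩
  · left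
    rcases hupd.eq_of_not_adj_of_adj (greedyMIS.not_adj hπ hw hv) hwv with ⟨rfl, -⟩ | ⟨rfl, -⟩
    · exact ⟨(hM v).2 hv, w, ⟨hwv, huv'⟩, (hM w).2 hw⟩
    · exact absurd hwv G'.irrefl
  · refine Or.inr ⟨fun h => hv ((hM v).1 h), fun w ⟨hwv, hlt'⟩ hw => ?_⟩
    rw [hM] at hw
    refine hall w ⟨hwv, ?_⟩ hw
    by_contra! hle
    have hvw : π v < π w := hle.lt_of_ne (hπ.ne hwv.ne.symm)
    have hwU := mem_iUnion_Sseq_of_mem hw self_mem_influenceClosure ⟨hwv.symm, hvw⟩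
    exact hlt'.not_gt (hord v w (iff_of_true self_mem_influenceClosure hwU) hvw)

theorem influenceClosure_subset_of_reorder :
    influenceClosure G G' π' v ⊆ influenceClosure G G' π v := by
  have hM := greedyMIS_iff_of_reorder hupd hπ hviol huv huv' hord
  -- the closure for `π` is closed under the rules for `π'`
  refine iUnion_Sseq_subset self_mem_influenceClosure ?_ ?_
  · intro w hw y hyU ⟨hyw, hlt'⟩
    replace hw : greedyMIS G π w := (hM w).1 hw
    rcases lt_or_gt_of_ne (hπ.ne hyw.ne) with hlt | hlt
    · exact mem_iUnion_Sseq_of_mem hw hyU ⟨hyw, hlt⟩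
    · refine mem_influenceClosure_of_mem_predSet hupd hπ hviol hw hyU ⟨hyw.symm, hlt⟩ ?_
      rintro ⟨rfl, rfl⟩
      exact hlt'.not_gt huv'
  · intro w hw hsub
    by_contra hwU
    refine hwU (mem_iUnion_Sseq_of_notMem (fun h => hw ((hM w).2 h)) ?_)
    rintro z ⟨⟨hzw, hlt⟩, hz⟩
    by_contra hzU
    exact hzU (hsub ⟨⟨hzw, hord z w (iff_of_false hzU hwU) hlt⟩, (hM z).2 hz⟩)

theorem subset_influenceClosure_of_reorder :
    influenceClosure G G' π v ⊆ influenceClosure G G' π' v := by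
  have hM := greedyMIS_iff_of_reorder hupd hπ hviol huv huv' hord
  set U := influenceClosure G G' π v
  -- `U` meets the closure for `π'` in a set closed under the rules for `π`
  suffices U ⊆ U ∩ influenceClosure G G' π' v from fun w hw => (this hw).2
  refine iUnion_Sseq_subset ⟨self_mem_influenceClosure, self_mem_influenceClosure⟩ ?_ ?_
  · rintro w hw y ⟨hyU, hyU'⟩ ⟨hyw, hlt⟩
    have hwU : w ∈ U := mem_iUnion_Sseq_of_mem hw hyU ⟨hyw, hlt⟩
    exact ⟨hwU, mem_iUnion_Sseq_of_mem ((hM w).2 hw) hyU'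
      ⟨hyw, hord y w (iff_of_true hyU hwU) hlt⟩⟩
  · intro w hw hsub
    have hwU : w ∈ U := mem_iUnion_Sseq_of_notMem hw fun z hz => (hsub hz).1
    refine ⟨hwU, mem_iUnion_Sseq_of_notMem (fun h => hw ((hM w).1 h)) ?_⟩
    rintro z ⟨⟨hzw, hlt'⟩, hz⟩
    replace hz : greedyMIS G π z := (hM z).1 hz
    rcases lt_or_gt_of_ne (hπ.ne hzw.ne) with hlt | hlt
    · exact (hsub ⟨⟨hzw, hlt⟩, hz⟩).2
    · have hzU : z ∈ U := mem_iUnion_Sseq_of_mem hz hwU ⟨hzw.symm, hlt⟩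
      exact absurd hlt' (hord w z (iff_of_true hwU hzU) hlt).not_gt

theorem influencedSet_eq_of_reorder : influencedSet G G' π' v = influencedSet G G' π v := by
  rw [influencedSet_eq_influenceClosure hviol,
    influencedSet_eq_influenceClosure (violated_of_reorder hupd hπ hviol huv huv' hord)]
  exact (influenceClosure_subset_of_reorder hupd hπ hviol huv huv' hord).antisymm
    (subset_influenceClosure_of_reorder hupd hπ hviol huv huv' hord)

end Invariance

namespace Finset

variable {α : Type*} [LinearOrder α]

/-- The cyclic permutation of `F` sending each element to the next larger one and the largest
to the smallest. -/
def succCycle (F : Finset α) : Equiv.Perm α := (F.sort (· ≤ ·)).formPerm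

variable {F : Finset α} {a b q q' r : α}

theorem succCycle_apply_of_notMem (hq : q ∉ F) : F.succCycle q = q :=
  List.formPerm_apply_of_notMem (by rwa [mem_sort])

theorem succCycle_apply_mem (hq : q ∈ F) : F.succCycle q ∈ F := by
  rw [← mem_sort (· ≤ ·)]
  exact List.formPerm_apply_mem_of_mem (by rwa [mem_sort])

theorem succCycle_sort_getElem {i : ℕ} (hi : i + 1 < (F.sort (· ≤ ·)).length) :
    F.succCycle (F.sort (· ≤ ·))[i] = (F.sort (· ≤ ·))[i + 1] := by
  rw [succCycle, List.formPerm_apply_getElem _ (sort_nodup _ _)]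
  simp only [Nat.mod_eq_of_lt hi]

theorem exists_sort_getElem_eq_of_lt (hq : q ∈ F) (hr : r ∈ F) (hqr : q < r) :
    ∃ (i : ℕ) (hi : i + 1 < (F.sort (· ≤ ·)).length), (F.sort (· ≤ ·))[i] = q := by
  obtain ⟨i, hi, rfl⟩ := List.mem_iff_getElem.1 ((mem_sort (· ≤ ·)).2 hq)
  obtain ⟨j, hj, rfl⟩ := List.mem_iff_getElem.1 ((mem_sort (· ≤ ·)).2 hr)
  have : i < j := (sortedLT_sort F).getElem_lt_getElem_iff.1 hqr
  exact ⟨i, by omega, rfl⟩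

theorem lt_succCycle (hq : q ∈ F) (hr : r ∈ F) (hqr : q < r) : q < F.succCycle q := by
  obtain ⟨i, hi, rfl⟩ := exists_sort_getElem_eq_of_lt hq hr hqr
  rw [succCycle_sort_getElem hi]
  exact (sortedLT_sort F).getElem_lt_getElem_iff.2 (Nat.lt_succ_self i)

theorem succCycle_lt_succCycle (hq : q ∈ F) (hq' : q' ∈ F) (hr : r ∈ F) (h : q < q')
    (h' : q' < r) : F.succCycle q < F.succCycle q' := by
  obtain ⟨i, hi, rfl⟩ := exists_sort_getElem_eq_of_lt hq hq' h
  obtain ⟨j, hj, rfl⟩ := exists_sort_getElem_eq_of_lt hq' hr h'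
  rw [succCycle_sort_getElem hi, succCycle_sort_getElem hj]
  have := (sortedLT_sort F).getElem_lt_getElem_iff.1 h
  exact (sortedLT_sort F).getElem_lt_getElem_iff.2 (by omega)

theorem succCycle_max' (hF : F.Nonempty) : F.succCycle (F.max' hF) = F.min' hF := by
  have hlen : 0 < (F.sort (· ≤ ·)).length := by simpa using hF.card_pos
  rw [← sorted_last_eq_max' (h := by omega), ← sorted_zero_eq_min' (h := hlen), succCycle,
    List.formPerm_apply_getElem _ (sort_nodup _ _)]
  simp only [Nat.sub_add_cancel hlen, Nat.mod_self]

theorem succCycle_symm_apply_of_notMem (hq : q ∉ F) : F.succCycle.symm q = q := by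
  rw [Equiv.symm_apply_eq, succCycle_apply_of_notMem hq]

theorem succCycle_symm_apply_mem (hq : q ∈ F) : F.succCycle.symm q ∈ F := by
  by_contra h
  have := succCycle_apply_of_notMem h
  rw [Equiv.apply_symm_apply] at this
  exact h (this ▸ hq)

theorem succCycle_symm_min' (hF : F.Nonempty) : F.succCycle.symm (F.min' hF) = F.max' hF := by
  rw [Equiv.symm_apply_eq, succCycle_max']

theorem succCycle_symm_lt_succCycle_symm (hq : q ∈ F) (hq' : q' ∈ F) (hr : r ∈ F) (h : r < q)
    (h' : q < q') : F.succCycle.symm q < F.succCycle.symm q' := by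
  have hF : F.Nonempty := ⟨r, hr⟩
  set p := F.succCycle.symm q
  set p' := F.succCycle.symm q'
  have hp : p ∈ F := succCycle_symm_apply_mem hq
  have hp' : p' ∈ F := succCycle_symm_apply_mem hq'
  by_contra! hle
  have hpmax : p < F.max' hF := by
    refine (le_max' F p hp).lt_of_ne fun hpm => ?_
    have : F.succCycle p = F.min' hF := hpm ▸ succCycle_max' hF
    rw [Equiv.apply_symm_apply] at this
    exact (this ▸ h).not_ge (min'_le F r hr)
  have hlt := succCycle_lt_succCycle hp' hp (max'_mem F hF)
    (hle.lt_of_ne fun he => h'.ne (F.succCycle.symm.injective he.symm)) hpmax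
  simp only [p, p', Equiv.apply_symm_apply] at hlt
  exact hlt.not_gt h'

section Icc

variable [LocallyFiniteOrder α]

theorem succCycle_Icc_right (hab : a ≤ b) : (Icc a b).succCycle b = a := by
  have hF : (Icc a b).Nonempty := nonempty_Icc.2 hab
  have hmax : (Icc a b).max' hF = b :=
    le_antisymm (max'_le _ _ _ fun x hx => (mem_Icc.1 hx).2) (le_max' _ _ (right_mem_Icc.2 hab))
  have hmin : (Icc a b).min' hF = a :=
    le_antisymm (min'_le _ _ (left_mem_Icc.2 hab)) (le_min' _ _ _ fun x hx => (mem_Icc.1 hx).1)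
  simpa only [hmax, hmin] using succCycle_max' hF

theorem succCycle_Icc_lt_succCycle_Icc (hq' : q' ≠ b) (h : q < q') :
    (Icc a b).succCycle q < (Icc a b).succCycle q' := by
  by_cases hq : q ∈ Icc a b <;> by_cases hq'F : q' ∈ Icc a b
  · have hq'b : q' < b := (mem_Icc.1 hq'F).2.lt_of_ne hq'
    exact succCycle_lt_succCycle hq hq'F (right_mem_Icc.2 ((mem_Icc.1 hq'F).1.trans hq'b.le)) h hq'b
  · have hbq' : b < q' := by
      simp only [mem_Icc, not_and, not_le] at hq'F
      exact hq'F ((mem_Icc.1 hq).1.trans h.le)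
    rw [succCycle_apply_of_notMem hq'F]
    exact ((mem_Icc.1 (succCycle_apply_mem hq)).2).trans_lt hbq'
  · have hqa : q < a := by
      simp only [mem_Icc, not_and, not_le] at hq
      exact lt_of_not_ge fun haq => (hq haq).not_ge (h.le.trans (mem_Icc.1 hq'F).2)
    rw [succCycle_apply_of_notMem hq]
    exact hqa.trans_le (mem_Icc.1 (succCycle_apply_mem hq'F)).1
  · rw [succCycle_apply_of_notMem hq, succCycle_apply_of_notMem hq'F]
    exact h

theorem lt_succCycle_Icc (hab : a ≤ b) (haq : a ≤ q) (hqb : q ≠ b) :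
    a < (Icc a b).succCycle q := by
  by_cases hq : q ∈ Icc a b
  · exact haq.trans_lt
      (lt_succCycle hq (right_mem_Icc.2 hab) ((mem_Icc.1 hq).2.lt_of_ne hqb))
  · have hbq : b < q := by
      simp only [mem_Icc, not_and, not_le] at hq
      exact hq haq
    rw [succCycle_apply_of_notMem hq]
    exact hab.trans_lt hbq

end Icc

end Finset

section Encoding

variable {V : Type*} {n : ℕ}

noncomputable def positionsUpTo (S : Set V) (π : V ≃ Fin n) (x : V) : Finset (Fin n) :=
  {p ∈ Finset.Iic (π x) | π.symm p ∈ S}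

/-- Shift the vertices of `S` at positions up to `π x` one step down among these positions;
the lowest one wraps around to `π x`. -/
noncomputable def encode (S : Set V) (π : V ≃ Fin n) (x : V) : V ≃ Fin n :=
  π.trans (positionsUpTo S π x).succCycle.symm

/-- Move `v` down to position `a`, shifting everything in between one step up. -/
def decode (a : Fin n) (v : V) (σ : V ≃ Fin n) : V ≃ Fin n :=
  σ.trans (Finset.Icc a (σ v)).succCycle

variable {S : Set V} {π σ : V ≃ Fin n} {a : Fin n} {v x y z : V}

theorem mem_positionsUpTo {p : Fin n} : p ∈ positionsUpTo S π x ↔ p ≤ π x ∧ π.symm p ∈ S := by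
  simp [positionsUpTo]

theorem encode_apply : encode S π x y = (positionsUpTo S π x).succCycle.symm (π y) := rfl

theorem encode_apply_of_notMem (hy : y ∉ S) : encode S π x y = π y :=
  Finset.succCycle_symm_apply_of_notMem fun h => hy (by simpa using (mem_positionsUpTo.1 h).2)

theorem le_encode (hmin : ∀ y ∈ S, π v ≤ π y) (hy : y ∈ S) : π v ≤ encode S π x y := by
  by_cases hp : π y ∈ positionsUpTo S π x
  · have := (mem_positionsUpTo.1 (Finset.succCycle_symm_apply_mem hp)).2
    simpa [encode_apply] using hmin _ this
  · rw [encode_apply, Finset.succCycle_symm_apply_of_notMem hp]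
    exact hmin y hy

section Minimal

variable (hvS : v ∈ S) (hxS : x ∈ S) (hmin : ∀ y ∈ S, π v ≤ π y)
include hvS hxS hmin

theorem self_mem_positionsUpTo : π v ∈ positionsUpTo S π x :=
  mem_positionsUpTo.2 ⟨hmin x hxS, by simpa using hvS⟩

theorem encode_apply_self : encode S π x v = π x := by
  set P := positionsUpTo S π x
  have hP : P.Nonempty := ⟨_, self_mem_positionsUpTo hvS hxS hmin⟩
  have hmin' : P.min' hP = π v := le_antisymm (P.min'_le _ (self_mem_positionsUpTo hvS hxS hmin))
    (P.le_min' _ _ fun p hp => by simpa using hmin _ (mem_positionsUpTo.1 hp).2)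
  have hmax' : P.max' hP = π x := le_antisymm (P.max'_le _ _ fun p hp => (mem_positionsUpTo.1 hp).1)
    (P.le_max' _ (mem_positionsUpTo.2 ⟨le_rfl, by simpa using hxS⟩))
  rw [encode_apply, ← hmin', Finset.succCycle_symm_min', hmax']

theorem encode_lt_encode (hy : y ∈ S) (hz : z ∈ S) (hyv : y ≠ v) (hyz : π y < π z) :
    encode S π x y < encode S π x z := by
  set P := positionsUpTo S π x
  have hvy : π v < π y := (hmin y hy).lt_of_ne (π.injective.ne hyv.symm)
  rcases le_or_gt (π z) (π x) with hzx | hxz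
  · exact Finset.succCycle_symm_lt_succCycle_symm
      (mem_positionsUpTo.2 ⟨hyz.le.trans hzx, by simpa using hy⟩)
      (mem_positionsUpTo.2 ⟨hzx, by simpa using hz⟩) (self_mem_positionsUpTo hvS hxS hmin) hvy hyz
  have hzP : π z ∉ P := fun h => (mem_positionsUpTo.1 h).1.not_gt hxz
  rw [encode_apply, encode_apply, Finset.succCycle_symm_apply_of_notMem hzP]
  by_cases hyP : π y ∈ P
  · exact ((mem_positionsUpTo.1 (Finset.succCycle_symm_apply_mem hyP)).1).trans_lt hxz
  · rwa [Finset.succCycle_symm_apply_of_notMem hyP]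

theorem positionsUpTo_encode : positionsUpTo S (encode S π x) v = positionsUpTo S π x := by
  ext p
  rw [mem_positionsUpTo, encode_apply_self hvS hxS hmin]
  have hsymm : (encode S π x).symm p = π.symm ((positionsUpTo S π x).succCycle p) := rfl
  by_cases hp : p ∈ positionsUpTo S π x
  · exact iff_of_true ⟨(mem_positionsUpTo.1 hp).1,
      hsymm ▸ (mem_positionsUpTo.1 (Finset.succCycle_apply_mem hp)).2⟩ hp
  · rw [hsymm, Finset.succCycle_apply_of_notMem hp, ← mem_positionsUpTo]

theorem encode_trans_succCycle :
    (encode S π x).trans (positionsUpTo S (encode S π x) v).succCycle = π := by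
  rw [positionsUpTo_encode hvS hxS hmin]
  ext y
  simp [encode_apply]

end Minimal

theorem decode_apply_self (ha : a ≤ σ v) : decode a v σ v = a :=
  Finset.succCycle_Icc_right ha

theorem decode_apply_of_lt (hy : σ y < a) : decode a v σ y = σ y :=
  Finset.succCycle_apply_of_notMem fun h => (Finset.mem_Icc.1 h).1.not_gt hy

theorem decode_lt_decode (hz : z ≠ v) (hyz : σ y < σ z) : decode a v σ y < decode a v σ z :=
  Finset.succCycle_Icc_lt_succCycle_Icc (σ.injective.ne hz) hyz

theorem lt_decode (ha : a ≤ σ v) (hy : y ≠ v) (hay : a ≤ σ y) : a < decode a v σ y :=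
  Finset.lt_succCycle_Icc ha hay (σ.injective.ne hy)

end Encoding

section Injection

variable {V : Type*} {G G' : SimpleGraph V} {u v : V} {n : ℕ} {a : Fin n}

theorem influencedSet_decode_encode (hupd : IsEdgeUpdate G G' u v) {π : V ≃ Fin n}
    (hu : π u < a) (hv : a ≤ π v) {x : V} (hx : x ∈ influencedSet G G' (fun y => (π y : ℕ)) v) :
    influencedSet G G'
        (fun y => (decode a v (encode (influencedSet G G' (fun y => (π y : ℕ)) v) π x) y : ℕ)) v =
      influencedSet G G' (fun y => (π y : ℕ)) v := by
  have : Finite V := Finite.of_equiv _ π.symm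
  set S := influencedSet G G' (fun y => (π y : ℕ)) v
  have hvS : v ∈ S := self_mem_influencedSet hx
  have hmin : ∀ y ∈ S, π v ≤ π y := fun y hy => hupd.le_of_mem_influencedSet hy
  set σ := encode S π x
  have haσ : a ≤ σ v := by
    rw [encode_apply_self hvS hx hmin]
    exact hv.trans (hmin x hx)
  have huS : u ∉ S := fun h => (hmin u h).not_gt (hu.trans_le hv)
  refine influencedSet_eq_of_reorder hupd (Fin.val_injective.comp π.injective) hx.1
    (hu.trans_le hv) ?_ ?_
  · change decode a v σ u < decode a v σ v
    rw [decode_apply_self haσ, decode_apply_of_lt (by rwa [encode_apply_of_notMem huS]),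
      encode_apply_of_notMem huS]
    exact hu
  rw [← influencedSet_eq_influenceClosure hx.1]
  intro y z hyz hlt
  change π y < π z at hlt
  change decode a v σ y < decode a v σ z
  by_cases hz : z ∈ S
  · have hy : y ∈ S := hyz.2 hz
    have hzv : z ≠ v := by
      rintro rfl
      exact (hmin y hy).not_gt hlt
    by_cases hyv : y = v
    · rw [hyv, decode_apply_self haσ]
      exact lt_decode haσ hzv (hv.trans (le_encode hmin hz))
    · exact decode_lt_decode hzv (encode_lt_encode hvS hx hmin hy hz hyv hlt)
  · have hy : y ∉ S := fun h => hz (hyz.1 h)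
    have hzv : z ≠ v := fun h => hz (h ▸ hvS)
    apply decode_lt_decode hzv
    rwa [encode_apply_of_notMem hy, encode_apply_of_notMem hz]

theorem encode_injective (hupd : IsEdgeUpdate G G' u v) {π₁ π₂ : V ≃ Fin n} {x₁ x₂ : V}
    (hu₁ : π₁ u < a) (hv₁ : a ≤ π₁ v) (hu₂ : π₂ u < a) (hv₂ : a ≤ π₂ v)
    (hx₁ : x₁ ∈ influencedSet G G' (fun y => (π₁ y : ℕ)) v)
    (hx₂ : x₂ ∈ influencedSet G G' (fun y => (π₂ y : ℕ)) v)
    (h : encode (influencedSet G G' (fun y => (π₁ y : ℕ)) v) π₁ x₁ =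
      encode (influencedSet G G' (fun y => (π₂ y : ℕ)) v) π₂ x₂) :
    π₁ = π₂ ∧ x₁ = x₂ := by
  have hS : influencedSet G G' (fun y => (π₁ y : ℕ)) v =
      influencedSet G G' (fun y => (π₂ y : ℕ)) v := by
    rw [← influencedSet_decode_encode hupd hu₁ hv₁ hx₁,
      ← influencedSet_decode_encode hupd hu₂ hv₂ hx₂, h]
  have hmin₁ := fun y (hy : y ∈ influencedSet G G' (fun y => (π₁ y : ℕ)) v) =>
    (hupd.le_of_mem_influencedSet hy : π₁ v ≤ π₁ y)
  have hmin₂ := fun y (hy : y ∈ influencedSet G G' (fun y => (π₂ y : ℕ)) v) =>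
    (hupd.le_of_mem_influencedSet hy : π₂ v ≤ π₂ y)
  have hπ : π₁ = π₂ := by
    rw [← encode_trans_succCycle (self_mem_influencedSet hx₁) hx₁ hmin₁,
      ← encode_trans_succCycle (self_mem_influencedSet hx₂) hx₂ hmin₂, h, hS]
  subst hπ
  refine ⟨rfl, π₁.injective ?_⟩
  rw [← encode_apply_self (self_mem_influencedSet hx₁) hx₁ hmin₁,
    ← encode_apply_self (self_mem_influencedSet hx₂) hx₂ hmin₂, h]

end Injection

section Counting

open Finset

variable {G G' : SimpleGraph V} {u v : V} {n : ℕ}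

theorem card_filter_val_apply_eq_eq (P : Fin n → Prop) [DecidablePred P] {j k : ℕ} (hj : j < n)
    (hk : k < n) (hPj : ∀ c, P c → (c : ℕ) ≠ j) (hPk : ∀ c, P c → (c : ℕ) ≠ k) :
    #{σ : V ≃ Fin n | P (σ u) ∧ (σ v : ℕ) = j} = #{σ : V ≃ Fin n | P (σ u) ∧ (σ v : ℕ) = k} := by
  set τ := Equiv.swap (⟨j, hj⟩ : Fin n) ⟨k, hk⟩
  have hτ : ∀ σ : V ≃ Fin n, P (σ u) → (σ.trans τ) u = σ u := fun σ hu =>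
    Equiv.swap_apply_of_ne_of_ne (Fin.ne_of_val_ne (hPj _ hu)) (Fin.ne_of_val_ne (hPk _ hu))
  refine card_nbij' (fun σ => σ.trans τ) (fun σ => σ.trans τ) ?_ ?_ ?_ ?_ <;> intro σ hσ
  · simp only [mem_coe, mem_filter, mem_univ, true_and] at hσ ⊢
    simp [hτ σ hσ.1, hσ.1, τ, show σ v = ⟨j, hj⟩ from Fin.ext hσ.2]
  · simp only [mem_coe, mem_filter, mem_univ, true_and] at hσ ⊢
    simp [hτ σ hσ.1, hσ.1, τ, show σ v = ⟨k, hk⟩ from Fin.ext hσ.2]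
  all_goals ext; simp [τ]

theorem card_filter_le_val_lt (P : Fin n → Prop) [DecidablePred P] {a b : ℕ}
    (hP : ∀ c, P c → (c : ℕ) < a) (hb : b ≤ n) :
    #{σ : V ≃ Fin n | P (σ u) ∧ a ≤ (σ v : ℕ) ∧ (σ v : ℕ) < b} =
      (b - a) * #{σ : V ≃ Fin n | P (σ u) ∧ (σ v : ℕ) = a} := by
  rcases le_or_gt b a with hba | hab
  · rw [Nat.sub_eq_zero_of_le hba, zero_mul, card_eq_zero, filter_eq_empty_iff]
    intro σ _ h
    omega
  rw [card_eq_sum_card_fiberwise (f := fun σ => (σ v : ℕ)) (t := Ico a b)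
    fun σ hσ => by simpa using (mem_filter.1 hσ).2.2]
  rw [sum_const_nat fun j hj => ?_, Nat.card_Ico]
  rw [mem_Ico] at hj
  rw [filter_filter, ← card_filter_val_apply_eq_eq P (hj.2.trans_le hb) (hab.trans_le hb)
    (fun c hc => (hP c hc).trans_le hj.1 |>.ne) (fun c hc => (hP c hc).ne)]
  congr 1
  ext σ
  simp only [mem_filter, mem_univ, true_and]
  constructor
  · exact fun h => ⟨h.1.1, h.2⟩
  · rintro ⟨h, rfl⟩
    exact ⟨⟨h, hj⟩, rfl⟩

theorem sum_ncard_influencedSet_le (hupd : IsEdgeUpdate G G' u v) (P : Fin n → Prop)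
    [DecidablePred P] {a : ℕ} (ha : a < n) (hP : ∀ c, P c → (c : ℕ) < a) (E : Finset (V ≃ Fin n))
    (hE : ∀ π ∈ E, P (π u) ∧ a ≤ (π v : ℕ)) :
    ∑ π ∈ E, (influencedSet G G' (fun y => (π y : ℕ)) v).ncard ≤
      #{σ : V ≃ Fin n | P (σ u) ∧ a ≤ (σ v : ℕ)} := by
  let S : (V ≃ Fin n) → Set V := fun π => influencedSet G G' (fun y => (π y : ℕ)) v
  have hu : ∀ π ∈ E, π u < ⟨a, ha⟩ := fun π hπ => hP _ (hE π hπ).1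
  calc ∑ π ∈ E, (S π).ncard = #(E.sigma fun π => (S π).toFinset) := by
        simp [card_sigma, Set.ncard_eq_toFinset_card']
    _ ≤ _ := by
      refine card_le_card_of_injOn (fun p => encode (S p.1) p.1 p.2) ?_ ?_
      · rintro ⟨π, x⟩ hp
        simp only [coe_sigma, Set.mem_sigma_iff, mem_coe, Set.mem_toFinset] at hp
        have hmin : ∀ y ∈ S π, π v ≤ π y := fun y hy => hupd.le_of_mem_influencedSet hy
        have huS : u ∉ S π := fun h => (hmin u h).not_gt ((hu π hp.1).trans_le (hE π hp.1).2)
        simp only [mem_coe, mem_filter, mem_univ, true_and]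
        rw [encode_apply_of_notMem huS, encode_apply_self (self_mem_influencedSet hp.2) hp.2 hmin]
        exact ⟨(hE π hp.1).1, (hE π hp.1).2.trans (hmin x hp.2)⟩
      · rintro ⟨π₁, x₁⟩ hp₁ ⟨π₂, x₂⟩ hp₂ h
        simp only [coe_sigma, Set.mem_sigma_iff, mem_coe, Set.mem_toFinset] at hp₁ hp₂
        obtain ⟨rfl, rfl⟩ := encode_injective hupd (hu π₁ hp₁.1) (hE π₁ hp₁.1).2 (hu π₂ hp₂.1)
          (hE π₂ hp₂.1).2 hp₁.2 hp₂.2 h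
        rfl

theorem sum_ncard_influencedSet_mul_le (hupd : IsEdgeUpdate G G' u v) (P : Fin n → Prop)
    [DecidablePred P] {a b : ℕ} (hP : ∀ c, P c → (c : ℕ) < a) (hab : a < b) (hb : b ≤ n) :
    (∑ π ∈ ({π | P (π u) ∧ a ≤ (π v : ℕ) ∧ (π v : ℕ) < b} : Finset (V ≃ Fin n)),
        (influencedSet G G' (fun y => (π y : ℕ)) v).ncard) * (b - a) ≤
      (n - a) * #{π : V ≃ Fin n | P (π u) ∧ a ≤ (π v : ℕ) ∧ (π v : ℕ) < b} := by
  have hbig : #{σ : V ≃ Fin n | P (σ u) ∧ a ≤ (σ v : ℕ)} =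
      (n - a) * #{σ : V ≃ Fin n | P (σ u) ∧ (σ v : ℕ) = a} := by
    rw [← card_filter_le_val_lt P hP le_rfl]
    congr 1
    ext σ
    simp
  rw [card_filter_le_val_lt P hP hb, mul_left_comm, ← hbig, mul_comm]
  refine Nat.mul_le_mul_left _ (sum_ncard_influencedSet_le hupd P (hab.trans_le hb) hP _ ?_)
  intro π hπ
  exact ⟨(mem_filter.1 hπ).2.1, (mem_filter.1 hπ).2.2.1⟩

end Counting

theorem stmt19_general (G G' : SimpleGraph V) (u v : V)
    (hupd : G' = G ⊔ SimpleGraph.fromEdgeSet {s(u, v)} ∨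
      G' = G \ SimpleGraph.fromEdgeSet {s(u, v)})
    (n C A B : ℕ) (hCA : C ≤ A) (hAB : A < B) (hBn : B ≤ n) :
    (∑ π : V ≃ Fin n,
        if (π u).val + 1 = C ∧ A ≤ (π v).val ∧ (π v).val < B then
          ((influencedSet G G' (fun x => ((π x : Fin n) : ℕ)) v).ncard : ℝ)
        else 0) /
      (({π : V ≃ Fin n |
          (π u).val + 1 = C ∧ A ≤ (π v).val ∧ (π v).val < B}).ncard : ℝ)
      < (n : ℝ) / ((B : ℝ) - A) := by
  let P : Fin n → Prop := fun c => (c : ℕ) + 1 = C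
  have hP : ∀ c, P c → (c : ℕ) < A := fun c hc => by simp only [P] at hc; omega
  set E : Finset (V ≃ Fin n) := {π | P (π u) ∧ A ≤ (π v : ℕ) ∧ (π v : ℕ) < B}
  have hBA : (0 : ℝ) < B - A := sub_pos.2 (by exact_mod_cast hAB)
  have hden : ({π : V ≃ Fin n | (π u).val + 1 = C ∧ A ≤ (π v).val ∧ (π v).val < B}).ncard =
      E.card := by
    rw [← Set.ncard_coe_finset]
    congr 1
    ext π
    simp [E, P]
  rw [← Finset.sum_filter, hden]
  change (∑ π ∈ E, _) / _ < _
  obtain hE | ⟨π₀, hπ₀⟩ := E.eq_empty_or_nonempty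
  · rw [hE, Finset.sum_empty, zero_div]
    exact div_pos (Nat.cast_pos.2 ((Nat.zero_le A).trans_lt (hAB.trans_le hBn))) hBA
  have hA : 0 < A := (Nat.zero_le _).trans_lt (hP _ (Finset.mem_filter.1 hπ₀).2.1)
  have hEpos : 0 < E.card := Finset.card_pos.2 ⟨π₀, hπ₀⟩
  have key : (∑ π ∈ E, (influencedSet G G' (fun x => (π x : ℕ)) v).ncard) * (B - A) <
      n * E.card :=
    (sum_ncard_influencedSet_mul_le hupd P hP hAB hBn).trans_lt
      (Nat.mul_lt_mul_of_pos_right (by omega) hEpos)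
  rw [div_lt_div_iff₀ (by exact_mod_cast hEpos) hBA, ← Nat.cast_sum, ← Nat.cast_sub hAB.le]
  exact_mod_cast key

/-- For a uniformly random bijection `π : V ≃ Fin n` (1-indexed position of `x`
is `(π x).val + 1`) conditioned on `π(u) = C` and `π(v) ∈ [A+1, B]`
(`u ≠ v`, `1 ≤ C ≤ A < B ≤ n`), the expected size of the influenced set
`S_v^π` of the edge update between `u` and `v` is strictly less than
`n/(B−A)`. -/
theorem stmt19 (G G' : SimpleGraph V) (u v : V) (huv : u ≠ v)
    (hupd : G' = G ⊔ SimpleGraph.fromEdgeSet {s(u, v)} ∨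
      G' = G \ SimpleGraph.fromEdgeSet {s(u, v)})
    (n C A B : ℕ) (hcard : Fintype.card V = n)
    (hC : 1 ≤ C) (hCA : C ≤ A) (hAB : A < B) (hBn : B ≤ n) :
    (∑ π : V ≃ Fin n,
        if (π u).val + 1 = C ∧ A ≤ (π v).val ∧ (π v).val < B then
          ((influencedSet G G' (fun x => ((π x : Fin n) : ℕ)) v).ncard : ℝ)
        else 0) /
      (({π : V ≃ Fin n |
          (π u).val + 1 = C ∧ A ≤ (π v).val ∧ (π v).val < B}).ncard : ℝ)
      < (n : ℝ) / ((B : ℝ) - A) :=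
  stmt19_general G G' u v hupd n C A B hCA hAB hBn
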